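/- arXiv:2503.21131 — 4 statements merged into one kernel-verified Lean document; each statement's English description precedes it below -/
import Mathlib

section
/- Let Ω ⊂ ℝⁿ be a bounded measurable set with |Ω| > 0, let g : Ω → ℝ be measurable and integrable with g ≥ 0 and ∫_Ω g < |Ω|, and let m : Ω → ℝ be measurable nonnegative and integrable. Then the function f(τ) := |Ω|·τ − ∫_Ω (τ·g(x) − m(x))₊ dx is strictly increasing on [0,∞). -/
open MeasureTheory

/-- The function `τ ↦ |Ω| τ − ∫_Ω (τ g − m)₊` is strictly increasing on `[0,∞)`
when `g ≥ 0`, `∫_Ω g < |Ω|`, and `m ≥ 0`. -/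
theorem stmt_2 {n : ℕ} (Ω : Set (Fin n → ℝ)) (hΩmeas : MeasurableSet Ω)
    (hΩbd : Bornology.IsBounded Ω) (hΩpos : 0 < (volume Ω).toReal)
    (g m : (Fin n → ℝ) → ℝ)
    (hgint : IntegrableOn g Ω volume) (hgnn : ∀ x ∈ Ω, 0 ≤ g x)
    (hgsmall : ∫ x in Ω, g x < (volume Ω).toReal)
    (hmint : IntegrableOn m Ω volume) (hmnn : ∀ x ∈ Ω, 0 ≤ m x) :
    StrictMonoOn
      (fun τ : ℝ => (volume Ω).toReal * τ - ∫ x in Ω, max (τ * g x - m x) 0)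
      (Set.Ici 0) := by
  intro a _ b _ hab
  have hIa : IntegrableOn (fun x => max (a * g x - m x) 0) Ω volume :=
    ((hgint.const_mul a).sub hmint).pos_part
  have hIb : IntegrableOn (fun x => max (b * g x - m x) 0) Ω volume :=
    ((hgint.const_mul b).sub hmint).pos_part
  have hptwise : ∀ x ∈ Ω, max (b * g x - m x) 0 ≤
      max (a * g x - m x) 0 + (b - a) * g x := by
    intro x hx
    have hg0 : 0 ≤ g x := hgnn x hx
    have h1 : 0 ≤ (b - a) * g x := mul_nonneg (by linarith) hg0
    rcases le_max_iff.mp (le_refl (max (b * g x - m x) 0)) with _ | _ <;>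
    · rcases max_cases (b * g x - m x) 0 with ⟨h, _⟩ | ⟨h, _⟩ <;>
        rw [h] <;> nlinarith [le_max_left (a * g x - m x) 0, le_max_right (a * g x - m x) 0]
  have hint : ∫ x in Ω, max (b * g x - m x) 0 ≤
      ∫ x in Ω, (max (a * g x - m x) 0 + (b - a) * g x) :=
    setIntegral_mono_on hIb (hIa.add (hgint.const_mul (b - a))) hΩmeas hptwise
  have hsplit : ∫ x in Ω, (max (a * g x - m x) 0 + (b - a) * g x) =
      (∫ x in Ω, max (a * g x - m x) 0) + (b - a) * ∫ x in Ω, g x := by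
    rw [integral_add hIa (hgint.const_mul (b - a)), integral_const_mul]
  have hgoal : (∫ x in Ω, max (b * g x - m x) 0) - ∫ x in Ω, max (a * g x - m x) 0 ≤
      (b - a) * ∫ x in Ω, g x := by
    rw [hsplit] at hint; linarith
  simp only
  nlinarith [hgoal, hab, hgsmall]
end

section
/- Under the hypotheses that Ω ⊂ ℝⁿ is bounded measurable with |Ω| > 0, g : Ω → ℝ is measurable integrable with g ≥ 0 and ∫_Ω g < |Ω|, m : Ω → ℝ is measurable nonnegative integrable, and N > 0, the equation S·|Ω| + ∫_Ω (S·g(x) − m(x))₊ dx = N has a unique solution S* > 0, and S* ∈ (0, N/|Ω|]. -/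
open MeasureTheory

/-- The equation `S|Ω| + ∫_Ω (S g − m)₊ = N` has a unique positive solution
`S*`, and `S* ∈ (0, N/|Ω|]`. -/
theorem stmt_3 {n : ℕ} (Ω : Set (Fin n → ℝ)) (hΩmeas : MeasurableSet Ω)
    (hΩbd : Bornology.IsBounded Ω) (hΩpos : 0 < (volume Ω).toReal)
    (g m : (Fin n → ℝ) → ℝ)
    (hgint : IntegrableOn g Ω volume) (hgnn : ∀ x ∈ Ω, 0 ≤ g x)
    (hgsmall : ∫ x in Ω, g x < (volume Ω).toReal)
    (hmint : IntegrableOn m Ω volume) (hmnn : ∀ x ∈ Ω, 0 ≤ m x)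
    (N : ℝ) (hN : 0 < N) :
    ∃ S : ℝ, (0 < S ∧ S ≤ N / (volume Ω).toReal ∧
        S * (volume Ω).toReal + ∫ x in Ω, max (S * g x - m x) 0 = N) ∧
      ∀ S' : ℝ, 0 < S' →
        S' * (volume Ω).toReal + ∫ x in Ω, max (S' * g x - m x) 0 = N →
        S' = S := by
  set V := (volume Ω).toReal with hVdef
  set F : ℝ → ℝ := fun S => ∫ x in Ω, max (S * g x - m x) 0 with hFdef
  set f : ℝ → ℝ := fun S => S * V + F S with hfdef
  have hint : ∀ S : ℝ, IntegrableOn (fun x => max (S * g x - m x) 0) Ω volume :=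
    fun S => ((hgint.const_mul S).sub hmint).pos_part
  -- monotonicity of F
  have hFmono : ∀ {S S' : ℝ}, S ≤ S' → F S ≤ F S' := by
    intro S S' hSS
    apply setIntegral_mono_on (hint S) (hint S') hΩmeas
    intro x hx
    have hg := hgnn x hx
    have : S * g x ≤ S' * g x := mul_le_mul_of_nonneg_right hSS hg
    exact max_le_max (by linarith) le_rfl
  have hfstrict : ∀ {S S' : ℝ}, S < S' → f S < f S' := by
    intro S S' hSS
    exact add_lt_add_of_lt_of_le (mul_lt_mul_of_pos_right hSS hΩpos) (hFmono hSS.le)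
  -- continuity of F via a Lipschitz bound
  have hC : ∀ S S' : ℝ, |F S - F S'| ≤ |S - S'| * ∫ x in Ω, |g x| := by
    intro S S'
    rw [hFdef]
    rw [← integral_sub (hint S) (hint S')]
    calc |∫ x in Ω, (max (S * g x - m x) 0 - max (S' * g x - m x) 0)|
        ≤ ∫ x in Ω, |max (S * g x - m x) 0 - max (S' * g x - m x) 0| :=
          by simpa [Real.norm_eq_abs] using
            norm_integral_le_integral_norm (μ := volume.restrict Ω)
              (fun x => max (S * g x - m x) 0 - max (S' * g x - m x) 0)
      _ ≤ ∫ x in Ω, |S - S'| * |g x| := by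
          apply setIntegral_mono_on (((hint S).sub (hint S')).abs)
            (hgint.abs.const_mul _) hΩmeas
          intro x hx
          calc |max (S * g x - m x) 0 - max (S' * g x - m x) 0|
              ≤ |(S * g x - m x) - (S' * g x - m x)| := abs_max_sub_max_le_abs _ _ _
            _ = |S - S'| * |g x| := by
                rw [← abs_mul]; ring_nf
      _ = |S - S'| * ∫ x in Ω, |g x| := by rw [integral_const_mul]
  have hFcont : Continuous F := by
    set C := ∫ x in Ω, |g x| with hCdef
    have hC0 : 0 ≤ C := setIntegral_nonneg hΩmeas fun x _ => abs_nonneg _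
    have : LipschitzWith (Real.toNNReal C) F := by
      apply LipschitzWith.of_dist_le_mul
      intro S S'
      rw [Real.dist_eq, Real.dist_eq]
      calc |F S - F S'| ≤ |S - S'| * C := hC S S'
        _ = (Real.toNNReal C : ℝ) * |S - S'| := by
            rw [Real.coe_toNNReal C hC0]; ring
    exact this.continuous
  have hfcont : Continuous f := by
    exact ((continuous_id.mul continuous_const).add hFcont)
  -- values at endpoints
  have hf0 : f 0 = 0 := by
    have : F 0 = 0 := by
      show (∫ x in Ω, max ((0:ℝ) * g x - m x) 0) = 0
      have : ∀ x ∈ Ω, max ((0:ℝ) * g x - m x) 0 = 0 := by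
        intro x hx
        have := hmnn x hx
        simp only [zero_mul, zero_sub]
        exact max_eq_right (by linarith)
      rw [setIntegral_congr_fun hΩmeas this, integral_zero]
    simp [hfdef, this]
  set b := N / V with hbdef
  have hb : 0 < b := div_pos hN hΩpos
  have hfb : N ≤ f b := by
    have hbV : b * V = N := div_mul_cancel₀ N (ne_of_gt hΩpos)
    have hFb : 0 ≤ F b := setIntegral_nonneg hΩmeas fun x _ => le_max_right _ _
    rw [hfdef]; simp only; linarith
  -- intermediate value theorem
  have hivt := intermediate_value_Ioc hb.le hfcont.continuousOn
  have hNmem : N ∈ Set.Ioc (f 0) (f b) := ⟨by rw [hf0]; exact hN, hfb⟩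
  obtain ⟨S, hSmem, hfS⟩ := hivt hNmem
  refine ⟨S, ⟨hSmem.1, hSmem.2, hfS⟩, ?_⟩
  intro S' _ hfS'
  have hfS'' : f S' = f S := hfS'.trans hfS.symm
  rcases lt_trichotomy S' S with h | h | h
  · exact absurd hfS'' (ne_of_lt (hfstrict h))
  · exact h
  · exact absurd hfS''.symm (ne_of_lt (hfstrict h))
end

section
/- Let u : [t₀,∞) → ℝ be differentiable with u(t₀) ≥ 0, and suppose there are constants A ≥ 0, B > 0, C > 0 such that u'(t) ≤ (A − B·u(t))·u(t)/(C + u(t)) for all t ≥ t₀ with u(t) ≥ 0 for all t. Then limsup_{t→∞} u(t) ≤ A/B. -/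
/-!
Fix `M > A/B`. Once `u ≥ M`, the right-hand side is at most `-δ` for a fixed `δ > 0`, because
`x ↦ (B x - A) x / (C + x)` is a product of increasing positive factors on `[M, ∞)`. So `u`
cannot stay above `M` for longer than `(u t₀ - M)/δ`, and once below `M` it can never cross
`M` upwards again. Hence `u ≤ M` eventually, for every `M > A/B`.
-/

open Filter Set

theorem exists_le_of_deriv_le_neg {u : ℝ → ℝ} {t₀ M δ : ℝ} (hδ : 0 < δ)
    (hdiff : ∀ t ≥ t₀, DifferentiableAt ℝ u t)
    (hder : ∀ t ≥ t₀, M < u t → deriv u t ≤ -δ) :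
    ∃ t ≥ t₀, u t ≤ M := by
  by_contra! habove
  set T := t₀ + (u t₀ - M) / δ
  have hT : t₀ ≤ T :=
    le_add_of_nonneg_right (div_nonneg (sub_nonneg.2 (habove t₀ le_rfl).le) hδ.le)
  have hdrop : u T - u t₀ ≤ -δ * (T - t₀) := by
    refine (convex_Ici t₀).image_sub_le_mul_sub_of_deriv_le
      (fun t ht => (hdiff t ht).continuousAt.continuousWithinAt)
      (fun t ht => (hdiff t (interior_subset ht)).differentiableWithinAt)
      (fun t ht => hder t (interior_subset ht) (habove t (interior_subset ht)))
      t₀ self_mem_Ici T hT hT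
  have hTM : u T ≤ M := by
    have : δ * (T - t₀) = u t₀ - M := by simp only [T]; field_simp; ring
    linarith
  exact (habove T hT).not_ge hTM

theorem le_of_le_of_deriv_neg_of_eq {u : ℝ → ℝ} {t₁ M : ℝ} (h₁ : u t₁ ≤ M)
    (hdiff : ∀ t ≥ t₁, DifferentiableAt ℝ u t)
    (hder : ∀ t ≥ t₁, u t = M → deriv u t < 0) :
    ∀ t ≥ t₁, u t ≤ M := fun _ ht =>
  image_le_of_deriv_right_lt_deriv_boundary' (B := fun _ => M) (B' := fun _ => 0)
    (fun s hs => (hdiff s hs.1).continuousAt.continuousWithinAt)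
    (fun s hs => (hdiff s hs.1).hasDerivAt.hasDerivWithinAt) h₁ continuousOn_const
    (fun _ _ => hasDerivWithinAt_const _ _ _) (fun s hs => hder s hs.1) ⟨ht, le_rfl⟩

theorem eventually_le_of_deriv_le_neg {u : ℝ → ℝ} {t₀ M δ : ℝ} (hδ : 0 < δ)
    (hdiff : ∀ t ≥ t₀, DifferentiableAt ℝ u t)
    (hder : ∀ t ≥ t₀, M ≤ u t → deriv u t ≤ -δ) :
    ∀ᶠ t in atTop, u t ≤ M := by
  obtain ⟨t₁, ht₁, hu₁⟩ := exists_le_of_deriv_le_neg hδ hdiff fun t ht h => hder t ht h.le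
  refine eventually_atTop.2 ⟨t₁, le_of_le_of_deriv_neg_of_eq hu₁
    (fun t ht => hdiff t (ht₁.trans ht)) fun t ht h => ?_⟩
  exact (hder t (ht₁.trans ht) h.ge).trans_lt (neg_neg_of_pos hδ)

theorem exists_pos_logistic_rhs_le_neg {A B C M : ℝ} (hB : 0 < B) (hC : 0 < C) (hM₀ : 0 < M)
    (hM : A / B < M) : ∃ δ > 0, ∀ x ≥ M, (A - B * x) * x / (C + x) ≤ -δ := by
  have hgap : 0 < B * M - A := by rw [div_lt_iff₀ hB] at hM; linarith
  refine ⟨(B * M - A) * (M / (C + M)), by positivity, fun x hx => ?_⟩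
  have hsat : M / (C + M) ≤ x / (C + x) := by
    rw [div_le_div_iff₀ (by linarith) (by linarith)]; nlinarith
  have hprod : (B * M - A) * (M / (C + M)) ≤ (B * x - A) * (x / (C + x)) :=
    mul_le_mul (by nlinarith) hsat (by positivity) (by nlinarith)
  rw [mul_div_assoc, ← neg_sub, neg_mul]
  exact neg_le_neg hprod

theorem stmt_8_general (u : ℝ → ℝ) (t₀ A B C : ℝ) (hA : 0 ≤ A) (hB : 0 < B)
    (hC : 0 < C)
    (hdiff : ∀ t ≥ t₀, DifferentiableAt ℝ u t)
    (hnn : ∀ t ≥ t₀, 0 ≤ u t)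
    (hineq : ∀ t ≥ t₀, deriv u t ≤ (A - B * u t) * u t / (C + u t)) :
    limsup u atTop ≤ A / B := by
  have hcobdd : IsCoboundedUnder (· ≤ ·) atTop u :=
    isCoboundedUnder_le_of_eventually_le atTop (eventually_atTop.2 ⟨t₀, hnn⟩)
  refine le_of_forall_pos_le_add fun ε hε => limsup_le_of_le hcobdd ?_
  obtain ⟨δ, hδ, hrhs⟩ := exists_pos_logistic_rhs_le_neg hB hC
    (add_pos_of_nonneg_of_pos (div_nonneg hA hB.le) hε) (lt_add_of_pos_right (A / B) hε)
  exact eventually_le_of_deriv_le_neg hδ hdiff fun t ht hu => (hineq t ht).trans (hrhs _ hu)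

/-- Saturating-logistic differential inequality: if `u ≥ 0` and
`u' ≤ (A − B u) u/(C + u)`, then `limsup_{t→∞} u(t) ≤ A/B`. -/
theorem stmt_8 (u : ℝ → ℝ) (t₀ A B C : ℝ) (hA : 0 ≤ A) (hB : 0 < B)
    (hC : 0 < C) (hu0 : 0 ≤ u t₀)
    (hdiff : ∀ t ≥ t₀, DifferentiableAt ℝ u t)
    (hnn : ∀ t ≥ t₀, 0 ≤ u t)
    (hineq : ∀ t ≥ t₀, deriv u t ≤ (A - B * u t) * u t / (C + u t)) :
    limsup u atTop ≤ A / B :=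
  stmt_8_general u t₀ A B C hA hB hC hdiff hnn hineq
end

section
/- Let F : [t₀,∞) → ℝ be continuous with F(t) > 0 for all t and ∫_{t₀}^∞ F(s) ds = ∞, and let K₁ ≤ K₂ be reals. Suppose u : [t₀,∞) → ℝ is differentiable and satisfies (K₁ − u(t))F(t) ≤ u'(t) ≤ (K₂ − u(t))F(t) for all t ≥ t₀. Then K₁ ≤ liminf_{t→∞} u(t) ≤ limsup_{t→∞} u(t) ≤ K₂. -/
open Filter intervalIntegral

private lemma stmt_15_aux (t₀ K : ℝ) (F u : ℝ → ℝ)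
    (hFc : ContinuousOn F (Set.Ici t₀))
    (hFdiv : Tendsto (fun t => ∫ s in t₀..t, F s) atTop atTop)
    (hdiff : ∀ t ≥ t₀, DifferentiableAt ℝ u t)
    (hlow : ∀ t ≥ t₀, (K - u t) * F t ≤ deriv u t) :
    ∀ᶠ t in atTop, K + (u t₀ - K) * Real.exp (-(∫ s in t₀..t, F s)) ≤ u t := by
  set F' : ℝ → ℝ := fun t => F (max t t₀) with hF'def
  have hF'c : Continuous F' :=
    hFc.comp_continuous (continuous_id.max continuous_const)
      (fun x => Set.mem_Ici.2 (le_max_right _ _))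
  set G : ℝ → ℝ := fun t => ∫ s in t₀..t, F' s with hGdef
  have hGder : ∀ t, HasDerivAt G (F' t) t := fun t =>
    intervalIntegral.integral_hasDerivAt_right (hF'c.intervalIntegrable _ _)
      hF'c.aestronglyMeasurable.stronglyMeasurableAtFilter hF'c.continuousAt
  have hGeq : ∀ t ≥ t₀, G t = ∫ s in t₀..t, F s := by
    intro t ht
    apply intervalIntegral.integral_congr
    intro s hs
    rw [Set.uIcc_of_le ht] at hs
    simp only [hF'def]
    rw [max_eq_left hs.1]
  have hGt0 : G t₀ = 0 := intervalIntegral.integral_same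
  set v : ℝ → ℝ := fun t => (u t - K) * Real.exp (G t) with hvdef
  have hvder : ∀ t ≥ t₀, HasDerivAt v
      (deriv u t * Real.exp (G t) + (u t - K) * (Real.exp (G t) * F' t)) t := by
    intro t ht
    exact (((hdiff t ht).hasDerivAt).sub_const K).mul ((hGder t).exp)
  have hmono : MonotoneOn v (Set.Ici t₀) := by
    apply monotoneOn_of_deriv_nonneg (convex_Ici t₀)
    · intro t ht
      exact ((hvder t ht).continuousAt).continuousWithinAt
    · intro t ht
      rw [interior_Ici] at ht
      exact ((hvder t ht.le).differentiableAt).differentiableWithinAt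
    · intro t ht
      rw [interior_Ici] at ht
      rw [(hvder t ht.le).deriv]
      have hF't : F' t = F t := by simp only [hF'def]; rw [max_eq_left ht.le]
      rw [hF't]
      have h1 := hlow t ht.le
      have h2 := (Real.exp_pos (G t)).le
      nlinarith [mul_le_mul_of_nonneg_right h1 h2]
  filter_upwards [eventually_ge_atTop t₀] with t ht
  have hv := hmono (Set.self_mem_Ici) (Set.mem_Ici.2 ht) ht
  simp only [hvdef, hGt0, Real.exp_zero, mul_one] at hv
  rw [← hGeq t ht]
  have hE : Real.exp (G t) * Real.exp (-(G t)) = 1 := by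
    rw [← Real.exp_add, add_neg_cancel, Real.exp_zero]
  have hEpos := (Real.exp_pos (-(G t))).le
  have hmul := mul_le_mul_of_nonneg_right hv hEpos
  rw [mul_assoc, hE, mul_one] at hmul
  linarith

/-- Two-sided squeezing via the differential inequality
`(K₁ − u) F ≤ u' ≤ (K₂ − u) F` with `∫ F = ∞`. -/
theorem stmt_15 (t₀ K₁ K₂ : ℝ) (hK : K₁ ≤ K₂) (F u : ℝ → ℝ)
    (hFc : ContinuousOn F (Set.Ici t₀)) (hFpos : ∀ t ≥ t₀, 0 < F t)
    (hFdiv : Tendsto (fun t => ∫ s in t₀..t, F s) atTop atTop)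
    (hdiff : ∀ t ≥ t₀, DifferentiableAt ℝ u t)
    (hlow : ∀ t ≥ t₀, (K₁ - u t) * F t ≤ deriv u t)
    (hhigh : ∀ t ≥ t₀, deriv u t ≤ (K₂ - u t) * F t) :
    K₁ ≤ liminf u atTop ∧ limsup u atTop ≤ K₂ := by
  set E : ℝ → ℝ := fun t => Real.exp (-(∫ s in t₀..t, F s)) with hEdef
  have hE0 : Tendsto E atTop (nhds 0) :=
    Real.tendsto_exp_atBot.comp (tendsto_neg_atTop_atBot.comp hFdiv)
  -- lower bound
  have h1 := stmt_15_aux t₀ K₁ F u hFc hFdiv hdiff hlow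
  -- upper bound, via `-u`
  have h2 := stmt_15_aux t₀ (-K₂) F (fun t => -u t) hFc hFdiv
      (fun t ht => (hdiff t ht).neg)
      (fun t ht => by
        have hd : deriv (fun t => -u t) t = -deriv u t := deriv.neg
        rw [hd]
        show (-K₂ - -u t) * F t ≤ -deriv u t
        have := hhigh t ht
        nlinarith)
  set L : ℝ → ℝ := fun t => K₁ + (u t₀ - K₁) * E t with hLdef
  set Uu : ℝ → ℝ := fun t => K₂ + (u t₀ - K₂) * E t with hUdef
  have h1' : ∀ᶠ t in atTop, L t ≤ u t := h1
  have h2' : ∀ᶠ t in atTop, u t ≤ Uu t := by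
    filter_upwards [h2] with t ht
    show u t ≤ K₂ + (u t₀ - K₂) * E t
    have ht' : -K₂ + (-u t₀ - -K₂) * E t ≤ -u t := ht
    nlinarith [ht']
  have hL : Tendsto L atTop (nhds K₁) := by
    have h := ((tendsto_const_nhds : Tendsto (fun _ : ℝ => K₁) atTop (nhds K₁)).add
      (hE0.const_mul (u t₀ - K₁)))
    simpa using h
  have hU : Tendsto Uu atTop (nhds K₂) := by
    have h := ((tendsto_const_nhds : Tendsto (fun _ : ℝ => K₂) atTop (nhds K₂)).add
      (hE0.const_mul (u t₀ - K₂)))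
    simpa using h
  have hubd : ∀ᶠ t in atTop, u t ≤ K₂ + 1 := by
    filter_upwards [h2', hU.eventually_le_const (lt_add_one K₂)] with t h h'
    exact h.trans h'
  have hlbd : ∀ᶠ t in atTop, K₁ - 1 ≤ u t := by
    filter_upwards [h1', hL.eventually_const_le (sub_one_lt K₁)] with t h h'
    exact h'.trans h
  constructor
  · rw [← hL.liminf_eq]
    exact liminf_le_liminf h1' hL.isBoundedUnder_ge
      (isCoboundedUnder_ge_of_eventually_le atTop hubd)
  · rw [← hU.limsup_eq]
    exact limsup_le_limsup h2'
      (isCoboundedUnder_le_of_eventually_le atTop hlbd) hU.isBoundedUnder_le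
end
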